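/- arXiv:2309.02412 — 3 statements merged into one kernel-verified Lean document; each statement's English description precedes it below -/
import Mathlib

section
/- Let x ∈ Q, z ∈ ℝⁿ, σ > 0, and let x⁺ ∈ Q satisfy the model-decrease condition M_{x,σ}(x⁺) + ψ(x⁺) ≤ F(x). Suppose ‖g − ∇f(x)‖ ≤ δ_g and ‖B − ∇²f(z)‖ ≤ δ_B for some δ_g, δ_B ≥ 0. Then, with r := ‖x⁺ − x‖, one has F(x) − F(x⁺) ≥ ((σ − L)/6)·r³ − (1/2)(δ_B + L‖x − z‖)·r² − δ_g·r. -/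
/-!
With `h = x⁺ - x`, the Lipschitz Hessian gives the cubic Taylor bound
`f x⁺ ≤ f x + ⟪∇f x, h⟫ + ½⟪∇²f x h, h⟫ + (L/6)‖h‖³`; subtracting it from the model decrease leaves
`⟪g - ∇f x, h⟫ + ½⟪(B - ∇²f x) h, h⟫`, which Cauchy–Schwarz bounds below using
`‖B - ∇²f x‖ ≤ δ_B + L‖x - z‖`. The Taylor bounds are obtained by comparing the remainder along
`t ↦ x + t • h` with a polynomial in `t` (the fencing form of the mean value theorem).
-/

open RealInnerProductSpace Set

section NormedSpace

variable {E F : Type*} [NormedAddCommGroup E] [NormedSpace ℝ E]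
  [NormedAddCommGroup F] [NormedSpace ℝ F]

theorem hasDerivAt_const_add_smul (x h : E) (t : ℝ) :
    HasDerivAt (fun t : ℝ => x + t • h) h t := by
  simpa using ((hasDerivAt_id t).smul_const h).const_add x

theorem norm_sub_sub_fderiv_apply_le_of_lipschitz {g : E → F} {L : ℝ}
    (hg : Differentiable ℝ g)
    (hLip : ∀ u v : E, ‖fderiv ℝ g v - fderiv ℝ g u‖ ≤ L * ‖v - u‖) (x h : E) :
    ‖g (x + h) - g x - fderiv ℝ g x h‖ ≤ L / 2 * ‖h‖ ^ 2 := by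
  have hderiv : ∀ t : ℝ, HasDerivAt (fun t : ℝ => g (x + t • h) - g x - t • fderiv ℝ g x h)
      (fderiv ℝ g (x + t • h) h - fderiv ℝ g x h) t := fun t =>
    ((((hg _).hasFDerivAt.comp_hasDerivAt t (hasDerivAt_const_add_smul x h t)).sub_const
      (g x)).sub ((hasDerivAt_id t).smul_const (fderiv ℝ g x h))).congr_deriv (by simp)
  have hbound : ∀ t ∈ Ico (0 : ℝ) 1,
      ‖fderiv ℝ g (x + t • h) h - fderiv ℝ g x h‖ ≤ L / 2 * ‖h‖ ^ 2 * (2 * t) := fun t ht =>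
    calc ‖fderiv ℝ g (x + t • h) h - fderiv ℝ g x h‖
        = ‖(fderiv ℝ g (x + t • h) - fderiv ℝ g x) h‖ := rfl
      _ ≤ L * ‖x + t • h - x‖ * ‖h‖ := by grw [ContinuousLinearMap.le_opNorm, hLip]
      _ = L / 2 * ‖h‖ ^ 2 * (2 * t) := by
        rw [add_sub_cancel_left, norm_smul, Real.norm_of_nonneg ht.1]; ring
  have hB : ∀ t : ℝ, HasDerivAt (fun t : ℝ => L / 2 * ‖h‖ ^ 2 * t ^ 2)
      (L / 2 * ‖h‖ ^ 2 * (2 * t)) t := fun t => by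
    simpa using (hasDerivAt_pow 2 t).const_mul (L / 2 * ‖h‖ ^ 2)
  simpa using image_norm_le_of_norm_deriv_right_le_deriv_boundary
    (fun t _ => (hderiv t).continuousAt.continuousWithinAt)
    (fun t _ => (hderiv t).hasDerivWithinAt) (by simp) hB hbound
    (right_mem_Icc.2 zero_le_one)

end NormedSpace

section InnerProductSpace

variable {E : Type*} [NormedAddCommGroup E] [InnerProductSpace ℝ E]

theorem abs_inner_apply_self_le (A : E →L[ℝ] E) (h : E) : |⟪A h, h⟫| ≤ ‖A‖ * ‖h‖ ^ 2 :=
  calc |⟪A h, h⟫| ≤ ‖A h‖ * ‖h‖ := abs_real_inner_le_norm _ _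
    _ ≤ ‖A‖ * ‖h‖ * ‖h‖ := by grw [A.le_opNorm]
    _ = ‖A‖ * ‖h‖ ^ 2 := by ring

variable [CompleteSpace E]

theorem ContDiff.differentiable_gradient {f : E → ℝ} (hf : ContDiff ℝ 2 f) :
    Differentiable ℝ (gradient f) := by
  show Differentiable ℝ ((InnerProductSpace.toDual ℝ E).symm ∘ fderiv ℝ f)
  exact (InnerProductSpace.toDual ℝ E).symm.differentiable.comp
    ((hf.fderiv_right (by norm_num)).differentiable one_ne_zero)

theorem abs_sub_taylor_two_le_of_lipschitz_hessian {f : E → ℝ} {L : ℝ}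
    (hf : Differentiable ℝ f) (hgrad : Differentiable ℝ (gradient f))
    (hLip : ∀ u v : E, ‖fderiv ℝ (gradient f) v - fderiv ℝ (gradient f) u‖ ≤ L * ‖v - u‖)
    (x h : E) :
    |f (x + h) - f x - ⟪gradient f x, h⟫ - 1 / 2 * ⟪fderiv ℝ (gradient f) x h, h⟫|
      ≤ L / 6 * ‖h‖ ^ 3 := by
  set H := fderiv ℝ (gradient f) x
  have hderiv : ∀ t : ℝ, HasDerivAt
      (fun t : ℝ => f (x + t • h) - f x - t * ⟪gradient f x, h⟫ - t ^ 2 / 2 * ⟪H h, h⟫)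
      ⟪gradient f (x + t • h) - gradient f x - H (t • h), h⟫ t := fun t => by
    have hline : HasDerivAt (fun t : ℝ => f (x + t • h)) ⟪gradient f (x + t • h), h⟫ t := by
      rw [inner_gradient_left]
      exact (hf _).hasFDerivAt.comp_hasDerivAt t (hasDerivAt_const_add_smul x h t)
    refine ((((hline.sub_const (f x)).sub ((hasDerivAt_id t).mul_const _)).sub
      (((hasDerivAt_pow 2 t).div_const 2).mul_const _))).congr_deriv ?_
    simp only [inner_sub_left, map_smul, real_inner_smul_left]
    ring
  have hbound : ∀ t ∈ Ico (0 : ℝ) 1,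
      ‖⟪gradient f (x + t • h) - gradient f x - H (t • h), h⟫‖ ≤ L / 6 * ‖h‖ ^ 3 * (3 * t ^ 2) :=
    fun t ht =>
    calc ‖⟪gradient f (x + t • h) - gradient f x - H (t • h), h⟫‖
        ≤ ‖gradient f (x + t • h) - gradient f x - H (t • h)‖ * ‖h‖ := norm_inner_le_norm _ _
      _ ≤ L / 2 * ‖t • h‖ ^ 2 * ‖h‖ := by
        grw [norm_sub_sub_fderiv_apply_le_of_lipschitz hgrad hLip]
      _ = L / 6 * ‖h‖ ^ 3 * (3 * t ^ 2) := by
        rw [norm_smul, Real.norm_of_nonneg ht.1]; ring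
  have hB : ∀ t : ℝ, HasDerivAt (fun t : ℝ => L / 6 * ‖h‖ ^ 3 * t ^ 3)
      (L / 6 * ‖h‖ ^ 3 * (3 * t ^ 2)) t := fun t => by
    simpa using (hasDerivAt_pow 3 t).const_mul (L / 6 * ‖h‖ ^ 3)
  simpa using image_norm_le_of_norm_deriv_right_le_deriv_boundary
    (fun t _ => (hderiv t).continuousAt.continuousWithinAt)
    (fun t _ => (hderiv t).hasDerivWithinAt) (by simp) hB hbound
    (right_mem_Icc.2 zero_le_one)

end InnerProductSpace

theorem stmt_1_general {n : ℕ}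
    (f ψ : EuclideanSpace ℝ (Fin n) → ℝ)
    (L : ℝ)
    (hf : ContDiff ℝ 2 f)
    (hLip : ∀ u v : EuclideanSpace ℝ (Fin n),
      ‖fderiv ℝ (gradient f) v - fderiv ℝ (gradient f) u‖ ≤ L * ‖v - u‖)
    (x : EuclideanSpace ℝ (Fin n)) (z : EuclideanSpace ℝ (Fin n))
    (σ δg δB : ℝ)
    (g : EuclideanSpace ℝ (Fin n))
    (B : EuclideanSpace ℝ (Fin n) →L[ℝ] EuclideanSpace ℝ (Fin n))
    (xp : EuclideanSpace ℝ (Fin n))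
    (hdec : f x + ⟪g, xp - x⟫ + 1 / 2 * ⟪B (xp - x), xp - x⟫ + σ / 6 * ‖xp - x‖ ^ 3
      + ψ xp ≤ f x + ψ x)
    (hg : ‖g - gradient f x‖ ≤ δg)
    (hB : ‖B - fderiv ℝ (gradient f) z‖ ≤ δB) :
    (f x + ψ x) - (f xp + ψ xp) ≥
      (σ - L) / 6 * ‖xp - x‖ ^ 3 - 1 / 2 * (δB + L * ‖x - z‖) * ‖xp - x‖ ^ 2
        - δg * ‖xp - x‖ := by
  set H := fderiv ℝ (gradient f)
  set r := ‖xp - x‖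
  have htaylor := (abs_le.mp (abs_sub_taylor_two_le_of_lipschitz_hessian
    (hf.differentiable two_ne_zero) hf.differentiable_gradient hLip x (xp - x))).2
  rw [add_sub_cancel] at htaylor
  have hgrad_err : -(δg * r) ≤ ⟪g, xp - x⟫ - ⟪gradient f x, xp - x⟫ := by
    rw [← inner_sub_left]
    exact neg_le_of_abs_le ((abs_real_inner_le_norm _ _).trans (by gcongr))
  have hhess_dist : ‖B - H x‖ ≤ δB + L * ‖x - z‖ :=
    calc ‖B - H x‖ ≤ ‖B - H z‖ + ‖H z - H x‖ := norm_sub_le_norm_sub_add_norm_sub _ _ _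
      _ ≤ δB + L * ‖z - x‖ := add_le_add hB (hLip x z)
      _ = δB + L * ‖x - z‖ := by rw [norm_sub_rev]
  have hhess_err :
      -((δB + L * ‖x - z‖) * r ^ 2) ≤ ⟪B (xp - x), xp - x⟫ - ⟪H x (xp - x), xp - x⟫ := by
    rw [← inner_sub_left, ← sub_apply]
    exact neg_le_of_abs_le ((abs_inner_apply_self_le _ _).trans (by gcongr))
  linarith

/-- Lemma 2 of the paper: progress in the objective value after one
inexact cubic-regularized Newton step satisfying the model-decrease condition. -/
theorem stmt_1 {n : ℕ} (hn : 1 ≤ n)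
    (f ψ : EuclideanSpace ℝ (Fin n) → ℝ) (Q : Set (EuclideanSpace ℝ (Fin n)))
    (L : ℝ) (hL : 0 ≤ L)
    (hf : ContDiff ℝ 2 f)
    (hLip : ∀ u v : EuclideanSpace ℝ (Fin n),
      ‖fderiv ℝ (gradient f) v - fderiv ℝ (gradient f) u‖ ≤ L * ‖v - u‖)
    (hQconv : Convex ℝ Q) (hψ : ConvexOn ℝ Q ψ)
    (x : EuclideanSpace ℝ (Fin n)) (hx : x ∈ Q) (z : EuclideanSpace ℝ (Fin n))
    (σ δg δB : ℝ) (hσ : 0 < σ) (hδg : 0 ≤ δg) (hδB : 0 ≤ δB)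
    (g : EuclideanSpace ℝ (Fin n))
    (B : EuclideanSpace ℝ (Fin n) →L[ℝ] EuclideanSpace ℝ (Fin n))
    (hBsym : ∀ u v : EuclideanSpace ℝ (Fin n), ⟪B u, v⟫ = ⟪u, B v⟫)
    (xp : EuclideanSpace ℝ (Fin n)) (hxp : xp ∈ Q)
    (hdec : f x + ⟪g, xp - x⟫ + 1 / 2 * ⟪B (xp - x), xp - x⟫ + σ / 6 * ‖xp - x‖ ^ 3
      + ψ xp ≤ f x + ψ x)
    (hg : ‖g - gradient f x‖ ≤ δg)
    (hB : ‖B - fderiv ℝ (gradient f) z‖ ≤ δB) :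
    (f x + ψ x) - (f xp + ψ xp) ≥
      (σ - L) / 6 * ‖xp - x‖ ^ 3 - 1 / 2 * (δB + L * ‖x - z‖) * ‖xp - x‖ ^ 2
        - δg * ‖xp - x‖ :=
  stmt_1_general f ψ L hf hLip x z σ δg δB g B xp hdec hg hB
end

section
/- Suppose A1 holds, ψ is twice differentiable, and F = f + ψ. Let ε > 0, m ≥ 1 an integer, x₀ ∈ Q, and let B be a symmetric matrix with ‖B − ∇²f(x₀)‖ ≤ (√n·L/2)·h, where σ ≥ 2⁴·(2/3)^{1/3}·m·L and 0 < h ≤ [3·σ^{3/2}·ε^{3/2} / (2⁷·192·n^{3/2}·L³)]^{1/3}. Let x₁, …, x_m ∈ Q be such that for each t = 0, …, m−1, x_{t+1} satisfies M_{x_t,σ}(x_{t+1}) + ψ(x_{t+1}) ≤ F(x_t), ‖∇M_{x_t,σ}(x_{t+1}) + ψ'(x_{t+1})‖ ≤ (σ/4)‖x_{t+1} − x_t‖² for some ψ'(x_{t+1}) ∈ ∂ψ(x_{t+1}), and B + σ‖x_{t+1} − x_t‖·I + ∇²ψ(x_{t+1}) ⪰ 0, where in the model one takes g = ∇f(x_t)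 and the same B for all t. Then either min_{1 ≤ t ≤ m} max{ ‖∇f(x_t) + ψ'(x_t)‖, (1/σ)·(2/3)^{10/3}·ξ(x_t)² } ≤ ε, or F(x₀) − F(x_m) ≥ m·ε^{3/2} / (2·192·σ^{1/2}). -/
open RealInnerProductSpace

/-- `negEigPart F y` is ξ(y) = max{−λ_min(∇²F(y)), 0}, defined as the least `c ≥ 0` such
that `∇²F(y) ⪰ −c·I`. -/
noncomputable def negEigPart {n : ℕ} (F : EuclideanSpace ℝ (Fin n) → ℝ)
    (y : EuclideanSpace ℝ (Fin n)) : ℝ :=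
  sInf {c : ℝ | 0 ≤ c ∧ ∀ v : EuclideanSpace ℝ (Fin n),
    -(c * ‖v‖ ^ 2) ≤ ⟪fderiv ℝ (gradient F) y v, v⟫}

/-!
Write `r t = ‖x (t + 1) - x t‖` and `ρ = √(ε / σ)`. Since the Hessian of `f` is `L`-Lipschitz,
`B` stays within `δ + L ∑ r` of `∇²f` at every iterate, where `δ = √n L h / 2 ≤ σ ρ / 40`.
With this, the cubic model turns each step into a decrease of `F` by at least
`(σ - L) / 6 · r³ - (δ + L ∑ r) / 2 · r²`, while at `x (t + 1)` the gradient is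
`O(σ r² + (δ + L ∑ r) r)` and the negative curvature `ξ` is at most `σ r + δ + L ∑ r`.
If no iterate is approximately second-order stationary, then either the path is long
(`L ∑ r > σ ρ / 2`) or every step has `r t ≥ 0.7 ρ`; in both cases `∑ r³ ≳ m ρ³` (by the
power-mean inequality in the first case), and summing the decreases gives
`F (x 0) - F (x m) ≥ σ m ρ³ / 384`, which is the claimed bound.
-/

open Finset

theorem norm_le_div_of_norm_deriv_le_pow {F : Type*} [NormedAddCommGroup F] [NormedSpace ℝ F]
    {φ φ' : ℝ → F} {C : ℝ} (k : ℕ) (h0 : φ 0 = 0) (hφ : ∀ s, HasDerivAt φ (φ' s) s)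
    (hbound : ∀ s ∈ Set.Ico (0 : ℝ) 1, ‖φ' s‖ ≤ C * s ^ k) : ‖φ 1‖ ≤ C / (k + 1) := by
  have hC : ∀ s, HasDerivAt (fun s : ℝ => C / (k + 1) * s ^ (k + 1)) (C * s ^ k) s := fun s => by
    refine ((hasDerivAt_pow (k + 1) s).const_mul (C / (k + 1))).congr_deriv ?_
    push_cast
    field_simp
  simpa using image_norm_le_of_norm_deriv_right_le_deriv_boundary
    (fun s _ => (hφ s).continuousAt.continuousWithinAt) (fun s _ => (hφ s).hasDerivWithinAt)
    (by simp [h0]) hC hbound (Set.right_mem_Icc.2 zero_le_one)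

theorem norm_sub_sub_fderiv_le_of_lipschitz {E F : Type*} [NormedAddCommGroup E]
    [NormedSpace ℝ E] [NormedAddCommGroup F] [NormedSpace ℝ F] {G : E → F}
    {G' : E → E →L[ℝ] F} {L : ℝ} (hG : ∀ z, HasFDerivAt G (G' z) z)
    (hLip : ∀ u v, ‖G' v - G' u‖ ≤ L * ‖v - u‖) (x y : E) :
    ‖G y - G x - G' x (y - x)‖ ≤ L / 2 * ‖y - x‖ ^ 2 := by
  set d := y - x
  have hφ : ∀ s : ℝ, HasDerivAt (fun s : ℝ => G (x + s • d) - G x - s • G' x d)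
      (G' (x + s • d) d - G' x d) s := fun s => by
    have hline : HasDerivAt (fun s : ℝ => x + s • d) d s := by
      simpa using ((hasDerivAt_id s).smul_const d).const_add x
    simpa using (((hG _).comp_hasDerivAt s hline).sub_const (G x)).fun_sub
      ((hasDerivAt_id s).smul_const (G' x d))
  have hbound : ∀ s ∈ Set.Ico (0 : ℝ) 1, ‖G' (x + s • d) d - G' x d‖ ≤ L * ‖d‖ ^ 2 * s ^ 1 := by
    rintro s ⟨hs, -⟩
    calc ‖G' (x + s • d) d - G' x d‖ ≤ ‖G' (x + s • d) - G' x‖ * ‖d‖ :=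
          (G' (x + s • d) - G' x).le_opNorm d
      _ ≤ L * ‖s • d‖ * ‖d‖ := by gcongr; simpa using hLip x (x + s • d)
      _ = L * ‖d‖ ^ 2 * s ^ 1 := by rw [norm_smul, Real.norm_of_nonneg hs]; ring
  have h1 := norm_le_div_of_norm_deriv_le_pow 1 (by simp) hφ hbound
  simp only [one_smul, d, add_sub_cancel] at h1
  linarith

section InnerProductSpace

variable {E : Type*} [NormedAddCommGroup E] [InnerProductSpace ℝ E]

theorem abs_inner_sub_inner_le {H : ℝ} {A B : E →L[ℝ] E} (hAB : ‖A - B‖ ≤ H) (v : E) :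
    |⟪A v, v⟫ - ⟪B v, v⟫| ≤ H * ‖v‖ ^ 2 := by
  rw [← inner_sub_left]
  calc |⟪A v - B v, v⟫| ≤ ‖(A - B) v‖ * ‖v‖ := abs_real_inner_le_norm _ _
    _ ≤ H * ‖v‖ * ‖v‖ := by gcongr; exact (A - B).le_of_opNorm_le hAB v
    _ = H * ‖v‖ ^ 2 := by ring

variable [CompleteSpace E] {f ψ : E → ℝ} {L σ H : ℝ} {B : E →L[ℝ] E} {x y : E}

theorem ContDiff.contDiff_gradient (hf : ContDiff ℝ 2 f) : ContDiff ℝ 1 (gradient f) :=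
  (InnerProductSpace.toDual ℝ E).symm.contDiff.comp (hf.fderiv_right (m := 1) le_rfl)

theorem ContDiff.hasFDerivAt_gradient (hf : ContDiff ℝ 2 f) (z : E) :
    HasFDerivAt (gradient f) (fderiv ℝ (gradient f) z) z :=
  (hf.contDiff_gradient.differentiable one_ne_zero z).hasFDerivAt

theorem le_add_inner_gradient_add_hessian_add_cube (hf : ContDiff ℝ 2 f)
    (hLip : ∀ u v, ‖fderiv ℝ (gradient f) v - fderiv ℝ (gradient f) u‖ ≤ L * ‖v - u‖) :
    f y ≤ f x + ⟪gradient f x, y - x⟫ + 1 / 2 * ⟪fderiv ℝ (gradient f) x (y - x), y - x⟫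
      + L / 6 * ‖y - x‖ ^ 3 := by
  set d := y - x
  set A := fderiv ℝ (gradient f) x
  have hφ : ∀ s : ℝ, HasDerivAt
      (fun s : ℝ => f (x + s • d) - f x - s * ⟪gradient f x, d⟫ - s ^ 2 / 2 * ⟪A d, d⟫)
      ⟪gradient f (x + s • d) - gradient f x - s • A d, d⟫ s := fun s => by
    have hline : HasDerivAt (fun s : ℝ => x + s • d) d s := by
      simpa using ((hasDerivAt_id s).smul_const d).const_add x
    have hf' := ((hf.differentiable two_ne_zero _).hasFDerivAt).comp_hasDerivAt s hline
    rw [← inner_gradient_left] at hf'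
    refine (((hf'.sub_const (f x)).fun_sub ((hasDerivAt_id s).mul_const ⟪gradient f x, d⟫)).fun_sub
      (((hasDerivAt_pow 2 s).div_const 2).mul_const ⟪A d, d⟫)).congr_deriv ?_
    simp only [inner_sub_left, real_inner_smul_left]
    push_cast
    ring
  have hbound : ∀ s ∈ Set.Ico (0 : ℝ) 1,
      ‖⟪gradient f (x + s • d) - gradient f x - s • A d, d⟫‖ ≤ L / 2 * ‖d‖ ^ 3 * s ^ 2 := by
    rintro s ⟨hs, -⟩
    have htaylor := norm_sub_sub_fderiv_le_of_lipschitz hf.hasFDerivAt_gradient hLip x (x + s • d)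
    rw [add_sub_cancel_left, map_smul, norm_smul, Real.norm_of_nonneg hs] at htaylor
    calc ‖⟪gradient f (x + s • d) - gradient f x - s • A d, d⟫‖
        ≤ ‖gradient f (x + s • d) - gradient f x - s • A d‖ * ‖d‖ := norm_inner_le_norm _ _
      _ ≤ L / 2 * (s * ‖d‖) ^ 2 * ‖d‖ := by gcongr
      _ = L / 2 * ‖d‖ ^ 3 * s ^ 2 := by ring
  have h1 := norm_le_div_of_norm_deriv_le_pow 2 (by simp) hφ hbound
  simp only [one_smul, d, add_sub_cancel] at h1
  rw [Real.norm_eq_abs, abs_le] at h1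
  push_cast at h1
  linarith [h1.2]

theorem gradient_fun_add {z : E} (hf : DifferentiableAt ℝ f z) (hψ : DifferentiableAt ℝ ψ z) :
    gradient (fun y => f y + ψ y) z = gradient f z + gradient ψ z := by
  simp only [gradient, fderiv_fun_add hf hψ, map_add]

theorem fderiv_gradient_fun_add_apply (hf : ContDiff ℝ 2 f) (hψ : ContDiff ℝ 2 ψ) (z v : E) :
    fderiv ℝ (gradient fun y => f y + ψ y) z v
      = fderiv ℝ (gradient f) z v + fderiv ℝ (gradient ψ) z v := by
  have hgrad : (gradient fun y => f y + ψ y) = fun y => gradient f y + gradient ψ y :=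
    funext fun y => gradient_fun_add (hf.differentiable two_ne_zero y)
      (hψ.differentiable two_ne_zero y)
  rw [hgrad, fderiv_fun_add (hf.hasFDerivAt_gradient z).differentiableAt
    (hψ.hasFDerivAt_gradient z).differentiableAt]
  rfl

theorem le_decrease_of_cubic_model_le (hf : ContDiff ℝ 2 f)
    (hLip : ∀ u v, ‖fderiv ℝ (gradient f) v - fderiv ℝ (gradient f) u‖ ≤ L * ‖v - u‖)
    (hdec : f x + ⟪gradient f x, y - x⟫ + 1 / 2 * ⟪B (y - x), y - x⟫
      + σ / 6 * ‖y - x‖ ^ 3 + ψ y ≤ f x + ψ x)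
    (hH : ‖fderiv ℝ (gradient f) x - B‖ ≤ H) :
    (σ - L) / 6 * ‖y - x‖ ^ 3 - H / 2 * ‖y - x‖ ^ 2 ≤ f x + ψ x - (f y + ψ y) := by
  have htaylor := le_add_inner_gradient_add_hessian_add_cube (x := x) (y := y) hf hLip
  have hB := (abs_le.1 (abs_inner_sub_inner_le hH (y - x))).2
  linarith

theorem norm_gradient_add_le_of_cubic_model (hf : ContDiff ℝ 2 f)
    (hLip : ∀ u v, ‖fderiv ℝ (gradient f) v - fderiv ℝ (gradient f) u‖ ≤ L * ‖v - u‖)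
    (hσ : 0 ≤ σ) (g : E)
    (hmodel : ‖gradient f x + B (y - x) + (σ / 2 * ‖y - x‖) • (y - x) + g‖ ≤
      σ / 4 * ‖y - x‖ ^ 2)
    (hH : ‖fderiv ℝ (gradient f) x - B‖ ≤ H) :
    ‖gradient f y + g‖ ≤ (L / 2 + 3 * σ / 4) * ‖y - x‖ ^ 2 + H * ‖y - x‖ := by
  set d := y - x
  have hsplit : gradient f y + g
      = (gradient f y - gradient f x - fderiv ℝ (gradient f) x d)
        + (fderiv ℝ (gradient f) x - B) d
        + (gradient f x + B d + (σ / 2 * ‖d‖) • d + g) - (σ / 2 * ‖d‖) • d := by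
    rw [sub_apply]; abel
  have htaylor := norm_sub_sub_fderiv_le_of_lipschitz hf.hasFDerivAt_gradient hLip x y
  have hsmul : ‖(σ / 2 * ‖d‖) • d‖ = σ / 2 * ‖d‖ ^ 2 := by
    rw [norm_smul, Real.norm_of_nonneg (by positivity)]; ring
  calc ‖gradient f y + g‖
      ≤ ‖gradient f y - gradient f x - fderiv ℝ (gradient f) x d‖
        + ‖(fderiv ℝ (gradient f) x - B) d‖
        + ‖gradient f x + B d + (σ / 2 * ‖d‖) • d + g‖ + ‖(σ / 2 * ‖d‖) • d‖ := by
        rw [hsplit]; exact (norm_sub_le _ _).trans (by gcongr; exact norm_add₃_le)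
    _ ≤ L / 2 * ‖d‖ ^ 2 + H * ‖d‖ + σ / 4 * ‖d‖ ^ 2 + σ / 2 * ‖d‖ ^ 2 := by
        rw [hsmul]; gcongr; exact (fderiv ℝ (gradient f) x - B).le_of_opNorm_le hH d
    _ = (L / 2 + 3 * σ / 4) * ‖d‖ ^ 2 + H * ‖d‖ := by ring

end InnerProductSpace

theorem norm_sub_le_add_mul_sum_range {E F : Type*} [SeminormedAddCommGroup E]
    [SeminormedAddCommGroup F] {G : E → F} {L δ : ℝ} (hL : 0 ≤ L)
    (hLip : ∀ u v, ‖G v - G u‖ ≤ L * ‖v - u‖) {x : ℕ → E} {b : F} (hb : ‖b - G (x 0)‖ ≤ δ)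
    {t m : ℕ} (htm : t ≤ m) :
    ‖G (x t) - b‖ ≤ δ + L * ∑ i ∈ range m, ‖x (i + 1) - x i‖ := by
  have hpath : ‖x t - x 0‖ ≤ ∑ i ∈ range m, ‖x (i + 1) - x i‖ :=
    calc ‖x t - x 0‖ ≤ ∑ i ∈ range t, ‖x (i + 1) - x i‖ := by
          simpa [dist_eq_norm'] using dist_le_range_sum_dist x t
      _ ≤ _ := sum_le_sum_of_subset_of_nonneg (range_subset_range.2 htm)
          fun _ _ _ => norm_nonneg _
  calc ‖G (x t) - b‖ ≤ ‖G (x t) - G (x 0)‖ + ‖G (x 0) - b‖ :=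
        norm_sub_le_norm_sub_add_norm_sub _ _ _
    _ ≤ L * ∑ i ∈ range m, ‖x (i + 1) - x i‖ + δ := by
        rw [norm_sub_rev (G (x 0))]
        gcongr
        exact (hLip _ _).trans (by gcongr)
    _ = _ := add_comm _ _

theorem negEigPart_nonneg {n : ℕ} (F : EuclideanSpace ℝ (Fin n) → ℝ)
    (y : EuclideanSpace ℝ (Fin n)) : 0 ≤ negEigPart F y :=
  Real.sInf_nonneg fun _ hc => hc.1

theorem negEigPart_le {n : ℕ} {F : EuclideanSpace ℝ (Fin n) → ℝ} {y : EuclideanSpace ℝ (Fin n)}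
    {c : ℝ} (hc : 0 ≤ c)
    (hF : ∀ v : EuclideanSpace ℝ (Fin n), -(c * ‖v‖ ^ 2) ≤ ⟪fderiv ℝ (gradient F) y v, v⟫) :
    negEigPart F y ≤ c :=
  csInf_le ⟨0, fun _ hc => hc.1⟩ ⟨hc, hF⟩

theorem negEigPart_add_le {n : ℕ} {f ψ : EuclideanSpace ℝ (Fin n) → ℝ} (hf : ContDiff ℝ 2 f)
    (hψ : ContDiff ℝ 2 ψ) {B : EuclideanSpace ℝ (Fin n) →L[ℝ] EuclideanSpace ℝ (Fin n)}
    {y : EuclideanSpace ℝ (Fin n)} {s H : ℝ}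
    (hPSD : ∀ v, 0 ≤ ⟪B v, v⟫ + s * ‖v‖ ^ 2 + ⟪fderiv ℝ (gradient ψ) y v, v⟫)
    (hH : ‖fderiv ℝ (gradient f) y - B‖ ≤ H) (hsH : 0 ≤ s + H) :
    negEigPart (fun z => f z + ψ z) y ≤ s + H :=
  negEigPart_le hsH fun v => by
    rw [fderiv_gradient_fun_add_apply hf hψ, inner_add_left]
    linarith [hPSD v, (abs_le.1 (abs_inner_sub_inner_le hH v)).1]

theorem two_thirds_rpow_ten_thirds_le : ((2 : ℝ) / 3) ^ ((10 : ℝ) / 3) ≤ 26 / 100 := by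
  refine le_of_pow_le_pow_left₀ three_ne_zero (by norm_num) ?_
  rw [← Real.rpow_natCast, ← Real.rpow_mul (by norm_num)]
  norm_num

theorem step_ge_of_gradient_gt {σ ρ r L H : ℝ} (hσ : 0 < σ) (hρ : 0 < ρ) (hr : 0 ≤ r)
    (hL : L ≤ σ / 13) (hH : H ≤ 21 / 40 * (σ * ρ))
    (hgrad : σ * ρ ^ 2 < (L / 2 + 3 * σ / 4) * r ^ 2 + H * r) : 7 / 10 * ρ ≤ r := by
  by_contra! hshort
  nlinarith [mul_le_mul_of_nonneg_right hH hr, mul_le_mul_of_nonneg_right hL (sq_nonneg r),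
    mul_lt_mul_of_pos_left hshort (mul_pos hσ hρ), mul_le_mul_of_nonneg_left hshort.le hr,
    mul_pos hσ (mul_pos hρ hρ), mul_nonneg hσ.le hr]

theorem step_ge_of_curvature_gt {σ ρ r H ξ : ℝ} (hσ : 0 < σ) (hξ0 : 0 ≤ ξ)
    (hξ : ξ ≤ σ * r + H) (hH : H ≤ 21 / 40 * (σ * ρ))
    (hcurv : σ * ρ ^ 2 < 1 / σ * ((2 : ℝ) / 3) ^ ((10 : ℝ) / 3) * ξ ^ 2) : 7 / 10 * ρ ≤ r := by
  have hξ_large : (σ * ρ) ^ 2 < 26 / 100 * ξ ^ 2 := by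
    have := (mul_lt_mul_iff_right₀ hσ).2 hcurv
    rw [show σ * (1 / σ * ((2 : ℝ) / 3) ^ ((10 : ℝ) / 3) * ξ ^ 2)
      = ((2 : ℝ) / 3) ^ ((10 : ℝ) / 3) * ξ ^ 2 by field_simp] at this
    nlinarith [two_thirds_rpow_ten_thirds_le, sq_nonneg ξ]
  by_contra! hshort
  nlinarith [mul_lt_mul_of_pos_left hshort hσ]

theorem step_ge_of_lt_max {n : ℕ} {f ψ : EuclideanSpace ℝ (Fin n) → ℝ} (hf : ContDiff ℝ 2 f)
    (hψ : ContDiff ℝ 2 ψ) {L σ ρ H : ℝ}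
    (hLip : ∀ u v, ‖fderiv ℝ (gradient f) v - fderiv ℝ (gradient f) u‖ ≤ L * ‖v - u‖)
    (hσ : 0 < σ) (hρ : 0 < ρ) (hL : L ≤ σ / 13) (hH : H ≤ 21 / 40 * (σ * ρ))
    {B : EuclideanSpace ℝ (Fin n) →L[ℝ] EuclideanSpace ℝ (Fin n)}
    {x y g : EuclideanSpace ℝ (Fin n)}
    (hHx : ‖fderiv ℝ (gradient f) x - B‖ ≤ H) (hHy : ‖fderiv ℝ (gradient f) y - B‖ ≤ H)
    (hmodel : ‖gradient f x + B (y - x) + (σ / 2 * ‖y - x‖) • (y - x) + g‖ ≤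
      σ / 4 * ‖y - x‖ ^ 2)
    (hPSD : ∀ v, 0 ≤ ⟪B v, v⟫ + σ * ‖y - x‖ * ‖v‖ ^ 2 + ⟪fderiv ℝ (gradient ψ) y v, v⟫)
    (hstat : σ * ρ ^ 2 < max ‖gradient f y + g‖
      (1 / σ * ((2 : ℝ) / 3) ^ ((10 : ℝ) / 3) * negEigPart (fun z => f z + ψ z) y ^ 2)) :
    7 / 10 * ρ ≤ ‖y - x‖ := by
  rcases lt_max_iff.1 hstat with hgrad | hcurv
  · exact step_ge_of_gradient_gt hσ hρ (norm_nonneg _) hL hH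
      (hgrad.trans_le (norm_gradient_add_le_of_cubic_model hf hLip hσ.le g hmodel hHx))
  · have hξ := negEigPart_add_le hf hψ hPSD hHy
      (add_nonneg (by positivity) ((norm_nonneg _).trans hHy))
    exact step_ge_of_curvature_gt hσ (negEigPart_nonneg _ _) hξ hH hcurv

theorem sum_range_mul_sum_range_sq_le {r : ℕ → ℝ} (hr : ∀ t, 0 ≤ r t) (m : ℕ) :
    (∑ t ∈ range m, r t) * ∑ t ∈ range m, r t ^ 2 ≤ m * ∑ t ∈ range m, r t ^ 3 := by
  have := ((monovaryOn_self r (range m)).pow_left₀ (fun t _ => hr t) 2).sum_mul_sum_le_card_mul_sum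
  rw [mul_comm]
  simpa [← pow_succ] using this

theorem sum_range_pow_three_ge {r : ℕ → ℝ} (hr : ∀ t, 0 ≤ r t) {m : ℕ} {ρ : ℝ} (hρ : 0 ≤ ρ)
    (h : 13 / 2 * m * ρ ≤ ∑ t ∈ range m, r t ∨ ∀ t < m, 7 / 10 * ρ ≤ r t) :
    343 / 1000 * m * ρ ^ 3 ≤ ∑ t ∈ range m, r t ^ 3 := by
  rcases h with hsum | hstep
  · rcases m.eq_zero_or_pos with rfl | hm
    · simp
    have hjensen := pow_sum_le_card_mul_sum_pow (s := range m) (fun t _ => hr t) 2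
    rw [card_range] at hjensen
    refine le_of_mul_le_mul_left ?_ (by positivity : (0 : ℝ) < (m : ℝ) ^ 2)
    calc (m : ℝ) ^ 2 * (343 / 1000 * m * ρ ^ 3) ≤ (13 / 2 * m * ρ) ^ 3 := by
          have : (0 : ℝ) ≤ m ^ 3 * ρ ^ 3 := by positivity
          nlinarith
      _ ≤ (∑ t ∈ range m, r t) ^ 3 := pow_le_pow_left₀ (by positivity) hsum 3
      _ ≤ m ^ 2 * ∑ t ∈ range m, r t ^ 3 := hjensen
  · calc 343 / 1000 * m * ρ ^ 3 = ∑ _t ∈ range m, (7 / 10 * ρ) ^ 3 := by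
          rw [sum_const, card_range, nsmul_eq_mul]; ring
      _ ≤ ∑ t ∈ range m, r t ^ 3 :=
          sum_le_sum fun t ht => pow_le_pow_left₀ (by positivity) (hstep t (mem_range.1 ht)) 3

theorem cubic_descent_ge {r : ℕ → ℝ} (hr : ∀ t, 0 ≤ r t) {m : ℕ} {σ L δ ρ : ℝ} (hσ : 0 < σ)
    (hρ : 0 < ρ) (hL : 0 ≤ L) (hmL : 13 * m * L ≤ σ) (hδ : δ ≤ σ * ρ / 40)
    (hsteps : L * ∑ t ∈ range m, r t ≤ σ * ρ / 2 → ∀ t < m, 7 / 10 * ρ ≤ r t) :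
    σ * m * ρ ^ 3 / 384 ≤ ∑ t ∈ range m,
      ((σ - L) / 6 * r t ^ 3 - (δ + L * ∑ i ∈ range m, r i) / 2 * r t ^ 2) := by
  rcases m.eq_zero_or_pos with rfl | hm
  · simp
  set S1 := ∑ t ∈ range m, r t
  set S2 := ∑ t ∈ range m, r t ^ 2
  set S3 := ∑ t ∈ range m, r t ^ 3
  have hm1 : (1 : ℝ) ≤ m := by exact_mod_cast hm
  have hS1 : 0 ≤ S1 := sum_nonneg fun t _ => hr t
  have hS2 : 0 ≤ S2 := sum_nonneg fun t _ => pow_nonneg (hr t) 2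
  have hS3 : 0 ≤ S3 := sum_nonneg fun t _ => pow_nonneg (hr t) 3
  have hS3_ge : 343 / 1000 * m * ρ ^ 3 ≤ S3 := by
    refine sum_range_pow_three_ge hr hρ.le ?_
    by_cases hsmall : L * S1 ≤ σ * ρ / 2
    · exact Or.inr (hsteps hsmall)
    · left
      refine le_of_mul_le_mul_left ?_ hσ
      nlinarith [mul_le_mul_of_nonneg_right hmL hS1]
  have hS12 : S1 * S2 ≤ m * S3 := sum_range_mul_sum_range_sq_le hr m
  -- AM-GM, `3 ρ r² ≤ 2 r³ + ρ³`, summed over the steps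
  have hS2ρ : 3 * ρ * S2 ≤ 2 * S3 + m * ρ ^ 3 := by
    calc 3 * ρ * S2 = ∑ t ∈ range m, 3 * ρ * r t ^ 2 := mul_sum _ _ _
      _ ≤ ∑ t ∈ range m, (2 * r t ^ 3 + ρ ^ 3) := sum_le_sum fun t _ => by
          nlinarith [mul_nonneg (sq_nonneg (r t - ρ)) (hr t),
            mul_nonneg (sq_nonneg (r t - ρ)) hρ.le]
      _ = 2 * S3 + m * ρ ^ 3 := by
          rw [sum_add_distrib, ← mul_sum, sum_const, card_range, nsmul_eq_mul]
  rw [sum_sub_distrib, ← mul_sum, ← mul_sum]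
  have hL13 : L ≤ σ / 13 := by nlinarith
  nlinarith [mul_le_mul_of_nonneg_right hL13 hS3, mul_le_mul_of_nonneg_left hS12 hL,
    mul_le_mul_of_nonneg_right hmL hS3, mul_le_mul_of_nonneg_right hδ hS2,
    mul_le_mul_of_nonneg_left hS2ρ hσ.le, mul_le_mul_of_nonneg_left hS3_ge hσ.le]

theorem thirteen_mul_mul_le_of_ge {m : ℕ} {L σ : ℝ} (hL : 0 ≤ L)
    (hσ : σ ≥ 2 ^ 4 * ((2 : ℝ) / 3) ^ ((1 : ℝ) / 3) * m * L) : 13 * m * L ≤ σ := by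
  have hcbrt : 13 / 16 ≤ ((2 : ℝ) / 3) ^ ((1 : ℝ) / 3) := by
    have h := Real.rpow_le_rpow (by norm_num) (show ((13 : ℝ) / 16) ^ 3 ≤ 2 / 3 by norm_num)
      (by norm_num : (0 : ℝ) ≤ 1 / 3)
    rwa [← Real.rpow_natCast, ← Real.rpow_mul (by norm_num), Nat.cast_ofNat,
      mul_one_div_cancel three_ne_zero, Real.rpow_one] at h
  nlinarith [mul_nonneg (Nat.cast_nonneg m) hL]

theorem rpow_three_halves_eq_sqrt_pow {a : ℝ} (ha : 0 ≤ a) : a ^ ((3 : ℝ) / 2) = √a ^ 3 := by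
  rw [Real.sqrt_eq_rpow, ← Real.rpow_natCast, ← Real.rpow_mul ha]
  norm_num

theorem half_sqrt_mul_mul_le_of_le_rpow {n L h σ ε : ℝ} (hn : 0 ≤ n) (hL : 0 ≤ L) (hσ : 0 ≤ σ)
    (hε : 0 ≤ ε) (hh : 0 ≤ h)
    (hhle : h ≤ (3 * σ ^ ((3 : ℝ) / 2) * ε ^ ((3 : ℝ) / 2)
      / (2 ^ 7 * 192 * n ^ ((3 : ℝ) / 2) * L ^ 3)) ^ ((1 : ℝ) / 3)) :
    √n * L / 2 * h ≤ √σ * √ε / 40 := by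
  set a := √n * L with ha_def
  set c := √σ * √ε with hc_def
  have ha : 0 ≤ a := by positivity
  have hc : 0 ≤ c := by positivity
  have hcube : h ^ 3 ≤ 3 * c ^ 3 / (2 ^ 7 * 192 * a ^ 3) := by
    have := pow_le_pow_left₀ hh hhle 3
    rw [← Real.rpow_natCast (_ ^ ((1 : ℝ) / 3)), ← Real.rpow_mul (by positivity)] at this
    norm_num at this
    rw [rpow_three_halves_eq_sqrt_pow hσ, rpow_three_halves_eq_sqrt_pow hε,
      rpow_three_halves_eq_sqrt_pow hn] at this
    refine this.trans_eq ?_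
    rw [ha_def, hc_def]
    ring
  rcases ha.eq_or_lt with ha0 | ha0
  · rw [← ha0, zero_div, zero_mul]; positivity
  refine le_of_pow_le_pow_left₀ three_ne_zero (by positivity) ?_
  calc (a / 2 * h) ^ 3 = a ^ 3 / 8 * h ^ 3 := by ring
    _ ≤ a ^ 3 / 8 * (3 * c ^ 3 / (2 ^ 7 * 192 * a ^ 3)) := by gcongr
    _ = 3 * c ^ 3 / 196608 := by field_simp; ring
    _ ≤ (c / 40) ^ 3 := by nlinarith [pow_nonneg hc 3]

theorem exists_scale_of_le_rpow {n : ℕ} {L h σ ε : ℝ} (m : ℕ) (hL : 0 ≤ L) (hσ : 0 < σ)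
    (hε : 0 < ε) (hh : 0 ≤ h)
    (hhle : h ≤ (3 * σ ^ ((3 : ℝ) / 2) * ε ^ ((3 : ℝ) / 2)
      / (2 ^ 7 * 192 * (n : ℝ) ^ ((3 : ℝ) / 2) * L ^ 3)) ^ ((1 : ℝ) / 3)) :
    ∃ ρ, 0 < ρ ∧ ε = σ * ρ ^ 2 ∧ √n * L / 2 * h ≤ σ * ρ / 40 ∧
      m * ε ^ ((3 : ℝ) / 2) / (2 * 192 * √σ) = σ * m * ρ ^ 3 / 384 := by
  have hsqrtσ : 0 < √σ := Real.sqrt_pos.2 hσ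
  refine ⟨√ε / √σ, by positivity, ?_, ?_, ?_⟩
  · rw [div_pow, Real.sq_sqrt hσ.le, Real.sq_sqrt hε.le]
    field_simp
  · convert half_sqrt_mul_mul_le_of_le_rpow (Nat.cast_nonneg n) hL hσ.le hε.le hh hhle using 2
    field_simp
    rw [Real.sq_sqrt hσ.le]
  · rw [rpow_three_halves_eq_sqrt_pow hε.le]
    field_simp
    rw [Real.sq_sqrt hσ.le]
    ring

theorem stmt_11_general {n : ℕ}
    (f ψ : EuclideanSpace ℝ (Fin n) → ℝ)
    (L : ℝ) (hL : 0 ≤ L)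
    (hf : ContDiff ℝ 2 f)
    (hLip : ∀ u v : EuclideanSpace ℝ (Fin n),
      ‖fderiv ℝ (gradient f) v - fderiv ℝ (gradient f) u‖ ≤ L * ‖v - u‖)
    (hψ2 : ContDiff ℝ 2 ψ)
    (ε : ℝ) (hε : 0 < ε) (m : ℕ)
    (x : ℕ → EuclideanSpace ℝ (Fin n))
    (σ h : ℝ)
    (hσ : σ ≥ 2 ^ 4 * ((2 : ℝ) / 3) ^ ((1 : ℝ) / 3) * m * L)
    (hh : 0 < h)
    (hhle : h ≤ (3 * σ ^ ((3 : ℝ) / 2) * ε ^ ((3 : ℝ) / 2)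
      / (2 ^ 7 * 192 * (n : ℝ) ^ ((3 : ℝ) / 2) * L ^ 3)) ^ ((1 : ℝ) / 3))
    (B : EuclideanSpace ℝ (Fin n) →L[ℝ] EuclideanSpace ℝ (Fin n))
    (hB : ‖B - fderiv ℝ (gradient f) (x 0)‖ ≤ Real.sqrt n * L / 2 * h)
    (ψ' : ℕ → EuclideanSpace ℝ (Fin n))
    (hdec : ∀ t < m,
      f (x t) + ⟪gradient f (x t), x (t + 1) - x t⟫
        + 1 / 2 * ⟪B (x (t + 1) - x t), x (t + 1) - x t⟫
        + σ / 6 * ‖x (t + 1) - x t‖ ^ 3 + ψ (x (t + 1)) ≤ f (x t) + ψ (x t))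
    (hmodel : ∀ t < m,
      ‖gradient f (x t) + B (x (t + 1) - x t)
          + (σ / 2 * ‖x (t + 1) - x t‖) • (x (t + 1) - x t) + ψ' (t + 1)‖ ≤
        σ / 4 * ‖x (t + 1) - x t‖ ^ 2)
    (hPSD : ∀ t < m, ∀ v : EuclideanSpace ℝ (Fin n),
      0 ≤ ⟪B v, v⟫ + σ * ‖x (t + 1) - x t‖ * ‖v‖ ^ 2
        + ⟪fderiv ℝ (gradient ψ) (x (t + 1)) v, v⟫) :
    (∃ t, 1 ≤ t ∧ t ≤ m ∧
        max ‖gradient f (x t) + ψ' t‖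
          (1 / σ * ((2 : ℝ) / 3) ^ ((10 : ℝ) / 3)
            * (negEigPart (fun y => f y + ψ y) (x t)) ^ 2) ≤ ε) ∨
      (f (x 0) + ψ (x 0)) - (f (x m) + ψ (x m)) ≥
        m * ε ^ ((3 : ℝ) / 2) / (2 * 192 * Real.sqrt σ) := by
  set r : ℕ → ℝ := fun t => ‖x (t + 1) - x t‖
  set H := √n * L / 2 * h + L * ∑ t ∈ range m, r t with hH_def
  have hmL := thirteen_mul_mul_le_of_ge hL hσ
  have hσ0 : 0 < σ := by
    refine lt_of_le_of_ne (le_trans (by positivity) hmL) fun hσ0 => ?_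
    rw [← hσ0] at hhle
    norm_num at hhle
    linarith
  obtain ⟨ρ, hρ, hε_eq, hδ, hbound⟩ := exists_scale_of_le_rpow m hL hσ0 hε hh.le hhle
  have hHess : ∀ t ≤ m, ‖fderiv ℝ (gradient f) (x t) - B‖ ≤ H :=
    fun t ht => norm_sub_le_add_mul_sum_range hL hLip hB ht
  refine or_iff_not_imp_left.2 fun hstat => ?_
  simp only [not_exists, not_and, not_le, hε_eq] at hstat
  have hsteps : L * ∑ t ∈ range m, r t ≤ σ * ρ / 2 → ∀ t < m, 7 / 10 * ρ ≤ r t := by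
    intro hsmall t ht
    have hL13 : L ≤ σ / 13 := by
      have : (1 : ℝ) ≤ m := by exact_mod_cast (by omega : 1 ≤ m)
      nlinarith
    exact step_ge_of_lt_max hf hψ2 hLip hσ0 hρ hL13 (by rw [hH_def]; linarith) (hHess t ht.le)
      (hHess (t + 1) ht) (hmodel t ht) (hPSD t ht) (hstat (t + 1) (by omega) (by omega))
  rw [ge_iff_le, hbound, ← sum_range_sub' (fun t => f (x t) + ψ (x t))]
  exact (cubic_descent_ge (fun t => norm_nonneg _) hσ0 hρ hL hmL hδ hsteps).trans
    (sum_le_sum fun t ht => le_decrease_of_cubic_model_le hf hLip (hdec t (mem_range.1 ht))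
      (hHess t (mem_range.1 ht).le))

/-- Lemma 8 of the paper: second-order guarantee for a block of `m` inexact
cubic Newton steps with lazy finite-difference Hessian, when the extra semidefinite condition
on the subproblem solutions holds. -/
theorem stmt_11 {n : ℕ} (hn : 1 ≤ n)
    (f ψ : EuclideanSpace ℝ (Fin n) → ℝ) (Q : Set (EuclideanSpace ℝ (Fin n)))
    (L : ℝ) (hL : 0 ≤ L)
    (hf : ContDiff ℝ 2 f)
    (hLip : ∀ u v : EuclideanSpace ℝ (Fin n),
      ‖fderiv ℝ (gradient f) v - fderiv ℝ (gradient f) u‖ ≤ L * ‖v - u‖)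
    (hψ2 : ContDiff ℝ 2 ψ) (hQconv : Convex ℝ Q) (hψconv : ConvexOn ℝ Q ψ)
    (ε : ℝ) (hε : 0 < ε) (m : ℕ) (hm : 1 ≤ m)
    (x : ℕ → EuclideanSpace ℝ (Fin n)) (hxQ : ∀ t ≤ m, x t ∈ Q)
    (σ h : ℝ)
    (hσ : σ ≥ 2 ^ 4 * ((2 : ℝ) / 3) ^ ((1 : ℝ) / 3) * m * L)
    (hh : 0 < h)
    (hhle : h ≤ (3 * σ ^ ((3 : ℝ) / 2) * ε ^ ((3 : ℝ) / 2)
      / (2 ^ 7 * 192 * (n : ℝ) ^ ((3 : ℝ) / 2) * L ^ 3)) ^ ((1 : ℝ) / 3))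
    (B : EuclideanSpace ℝ (Fin n) →L[ℝ] EuclideanSpace ℝ (Fin n))
    (hBsym : ∀ u v : EuclideanSpace ℝ (Fin n), ⟪B u, v⟫ = ⟪u, B v⟫)
    (hB : ‖B - fderiv ℝ (gradient f) (x 0)‖ ≤ Real.sqrt n * L / 2 * h)
    (ψ' : ℕ → EuclideanSpace ℝ (Fin n))
    (hψ' : ∀ t < m, ∀ y : EuclideanSpace ℝ (Fin n),
      ψ (x (t + 1)) + ⟪ψ' (t + 1), y - x (t + 1)⟫ ≤ ψ y)
    (hdec : ∀ t < m,
      f (x t) + ⟪gradient f (x t), x (t + 1) - x t⟫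
        + 1 / 2 * ⟪B (x (t + 1) - x t), x (t + 1) - x t⟫
        + σ / 6 * ‖x (t + 1) - x t‖ ^ 3 + ψ (x (t + 1)) ≤ f (x t) + ψ (x t))
    (hmodel : ∀ t < m,
      ‖gradient f (x t) + B (x (t + 1) - x t)
          + (σ / 2 * ‖x (t + 1) - x t‖) • (x (t + 1) - x t) + ψ' (t + 1)‖ ≤
        σ / 4 * ‖x (t + 1) - x t‖ ^ 2)
    (hPSD : ∀ t < m, ∀ v : EuclideanSpace ℝ (Fin n),
      0 ≤ ⟪B v, v⟫ + σ * ‖x (t + 1) - x t‖ * ‖v‖ ^ 2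
        + ⟪fderiv ℝ (gradient ψ) (x (t + 1)) v, v⟫) :
    (∃ t, 1 ≤ t ∧ t ≤ m ∧
        max ‖gradient f (x t) + ψ' t‖
          (1 / σ * ((2 : ℝ) / 3) ^ ((10 : ℝ) / 3)
            * (negEigPart (fun y => f y + ψ y) (x t)) ^ 2) ≤ ε) ∨
      (f (x 0) + ψ (x 0)) - (f (x m) + ψ (x m)) ≥
        m * ε ^ ((3 : ℝ) / 2) / (2 * 192 * Real.sqrt σ) :=
  stmt_11_general f ψ L hL hf hLip hψ2 ε hε m x σ h hσ hh hhle B hB ψ' hdec hmodel hPSD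
end

section
/- Suppose A1 holds. Let μ > 0, σ > 0, x ∈ Q, z ∈ ℝⁿ, and let the symmetric matrix B satisfy B ⪰ (μ/2)·I and ‖B − ∇²f(z)‖ ≤ δ_B for some δ_B ≥ 0. Let x⁺ ∈ Q satisfy ‖∇M_{x,σ}(x⁺) + ψ'(x⁺)‖ ≤ (σ/4)‖x⁺ − x‖² for some ψ'(x⁺) ∈ ∂ψ(x⁺), where in the model g = ∇f(x). Then for every subgradient F'(x) = ∇f(x) + ψ'(x) with ψ'(x) ∈ ∂ψ(x): ‖∇f(x⁺) + ψ'(x⁺)‖ ≤ (3σ/4 + L/2)·(2‖F'(x)‖/μ)² + (δ_B + L‖x − z‖)·(2‖F'(x)‖/μ). -/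
/-! Testing the approximate stationarity condition against the step `d = x⁺ - x`, monotonicity of
`∂ψ` and `B ⪰ (μ/2) I` give `(μ/2) ‖d‖² ≤ ‖F'(x)‖ ‖d‖`, i.e. `‖d‖ ≤ 2 ‖F'(x)‖ / μ`. Then
`∇f(x⁺) + ψ'(x⁺)` is the Taylor remainder of `∇f` at `x`, minus `(B - ∇²f(x)) d`, plus the model
residual, minus the cubic term `(σ/2) ‖d‖ d`, which bounds it by
`(3σ/4 + L/2) ‖d‖² + (δ_B + L ‖x - z‖) ‖d‖`. -/

open RealInnerProductSpace

theorem norm_sub_sub_fderiv_le_of_lipschitz_fderiv {E F : Type*} [NormedAddCommGroup E]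
    [NormedSpace ℝ E] [NormedAddCommGroup F] [NormedSpace ℝ F] {g : E → F}
    (hg : Differentiable ℝ g) {L : ℝ}
    (hLip : ∀ u v, ‖fderiv ℝ g v - fderiv ℝ g u‖ ≤ L * ‖v - u‖) (x y : E) :
    ‖g y - g x - fderiv ℝ g x (y - x)‖ ≤ L / 2 * ‖y - x‖ ^ 2 := by
  set d := y - x
  set φ : ℝ → F := fun t => g (x + t • d) - g x - t • fderiv ℝ g x d
  have hφ : ∀ t, HasDerivAt φ (fderiv ℝ g (x + t • d) d - fderiv ℝ g x d) t := by
    intro t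
    have hline : HasDerivAt (fun t : ℝ => x + t • d) d t := by
      simpa using ((hasDerivAt_id t).smul_const d).const_add x
    have := (((hg _).hasFDerivAt.comp_hasDerivAt t hline).sub_const (g x)).sub
      ((hasDerivAt_id' t).smul_const (fderiv ℝ g x d))
    rwa [one_smul] at this
  have hbound : ∀ t ∈ Set.Ico (0 : ℝ) 1,
      ‖fderiv ℝ g (x + t • d) d - fderiv ℝ g x d‖ ≤ L * ‖d‖ ^ 2 * t := by
    rintro t ⟨ht, -⟩
    calc ‖(fderiv ℝ g (x + t • d) - fderiv ℝ g x) d‖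
        ≤ ‖fderiv ℝ g (x + t • d) - fderiv ℝ g x‖ * ‖d‖ := ContinuousLinearMap.le_opNorm _ _
      _ ≤ L * ‖t • d‖ * ‖d‖ := by gcongr; simpa using hLip x (x + t • d)
      _ = L * ‖d‖ ^ 2 * t := by rw [norm_smul, Real.norm_of_nonneg ht]; ring
  have hboundary :
      ∀ t : ℝ, HasDerivAt (fun t => L / 2 * ‖d‖ ^ 2 * t ^ 2) (L * ‖d‖ ^ 2 * t) t := by
    intro t
    refine ((hasDerivAt_pow 2 t).const_mul (L / 2 * ‖d‖ ^ 2)).congr_deriv ?_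
    push_cast
    ring
  have hφ_one := image_norm_le_of_norm_deriv_right_le_deriv_boundary
    (fun t _ => (hφ t).continuousAt.continuousWithinAt) (fun t _ => (hφ t).hasDerivWithinAt)
    (by simp [φ]) hboundary hbound (Set.right_mem_Icc.2 zero_le_one)
  simpa [φ, d] using hφ_one

section InnerProductSpace

variable {E : Type*} [NormedAddCommGroup E] [InnerProductSpace ℝ E]

theorem inner_le_inner_of_subgradient {ψ : E → ℝ} {x y p q : E}
    (hp : ∀ z, ψ x + ⟪p, z - x⟫ ≤ ψ z) (hq : ∀ z, ψ y + ⟪q, z - y⟫ ≤ ψ z) :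
    ⟪p, y - x⟫ ≤ ⟪q, y - x⟫ := by
  have hpy := hp y
  have hqx := hq x
  rw [← neg_sub y x, inner_neg_right] at hqx
  linarith

theorem norm_step_le_of_approx_stationary {B : E →L[ℝ] E} {μ σ : ℝ} (hμ : 0 < μ) (hσ : 0 ≤ σ)
    (hB : ∀ v, μ / 2 * ‖v‖ ^ 2 ≤ ⟪B v, v⟫) {g p q d : E} (hpq : ⟪q, d⟫ ≤ ⟪p, d⟫)
    (hmodel : ‖g + B d + (σ / 2 * ‖d‖) • d + p‖ ≤ σ / 4 * ‖d‖ ^ 2) :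
    ‖d‖ ≤ 2 * ‖g + q‖ / μ := by
  set r := ‖d‖
  have hr : 0 ≤ r := norm_nonneg d
  have hmodel_inner : ⟪g + B d + (σ / 2 * r) • d + p, d⟫ ≤ σ / 4 * r ^ 3 :=
    calc _ ≤ ‖g + B d + (σ / 2 * r) • d + p‖ * r := real_inner_le_norm _ _
      _ ≤ σ / 4 * r ^ 2 * r := by gcongr
      _ = σ / 4 * r ^ 3 := by ring
  have hexpand : ⟪g + B d + (σ / 2 * r) • d + p, d⟫
      = ⟪g + q, d⟫ + ⟪B d, d⟫ + σ / 2 * r ^ 3 + (⟪p, d⟫ - ⟪q, d⟫) := by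
    simp only [inner_add_left, real_inner_smul_left, real_inner_self_eq_norm_sq]
    ring
  have hgq : -(‖g + q‖ * r) ≤ ⟪g + q, d⟫ := (abs_le.1 (abs_real_inner_le_norm _ _)).1
  have hquad : μ / 2 * r ^ 2 ≤ ‖g + q‖ * r := by
    nlinarith [hB d, mul_nonneg hσ (pow_nonneg hr 3)]
  rcases hr.eq_or_lt with hr0 | hrpos
  · rw [← hr0]
    positivity
  · rw [le_div_iff₀ hμ]
    nlinarith

variable [CompleteSpace E]

theorem norm_gradient_add_le_of_approx_stationary {f : E → ℝ}
    (hf : Differentiable ℝ (gradient f)) {L : ℝ}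
    (hLip : ∀ u v, ‖fderiv ℝ (gradient f) v - fderiv ℝ (gradient f) u‖ ≤ L * ‖v - u‖)
    {B : E →L[ℝ] E} {σ δ : ℝ} (hσ : 0 ≤ σ) {x xp p : E}
    (hB : ‖B - fderiv ℝ (gradient f) x‖ ≤ δ)
    (hmodel : ‖gradient f x + B (xp - x) + (σ / 2 * ‖xp - x‖) • (xp - x) + p‖ ≤
      σ / 4 * ‖xp - x‖ ^ 2) :
    ‖gradient f xp + p‖ ≤ (3 * σ / 4 + L / 2) * ‖xp - x‖ ^ 2 + δ * ‖xp - x‖ := by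
  set H := fderiv ℝ (gradient f)
  set d := xp - x
  set e := gradient f x + B d + (σ / 2 * ‖d‖) • d + p
  have htaylor : ‖gradient f xp - gradient f x - H x d‖ ≤ L / 2 * ‖d‖ ^ 2 :=
    norm_sub_sub_fderiv_le_of_lipschitz_fderiv hf hLip x xp
  have hBd : ‖(B - H x) d‖ ≤ δ * ‖d‖ :=
    ((B - H x).le_opNorm d).trans (by gcongr)
  have hcubic : ‖(σ / 2 * ‖d‖) • d‖ = σ / 2 * ‖d‖ ^ 2 := by
    rw [norm_smul, Real.norm_of_nonneg (by positivity)]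
    ring
  have hsplit : gradient f xp + p
      = (gradient f xp - gradient f x - H x d) - (B - H x) d + e - (σ / 2 * ‖d‖) • d := by
    simp only [e, sub_apply]
    abel
  calc ‖gradient f xp + p‖
      ≤ ‖gradient f xp - gradient f x - H x d‖ + ‖(B - H x) d‖ + ‖e‖
          + ‖(σ / 2 * ‖d‖) • d‖ := by
        rw [hsplit]
        refine (norm_sub_le _ _).trans ?_
        gcongr
        refine (norm_add_le _ _).trans ?_
        gcongr
        exact norm_sub_le _ _
    _ ≤ L / 2 * ‖d‖ ^ 2 + δ * ‖d‖ + σ / 4 * ‖d‖ ^ 2 + σ / 2 * ‖d‖ ^ 2 := by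
        rw [hcubic]
        gcongr
    _ = (3 * σ / 4 + L / 2) * ‖d‖ ^ 2 + δ * ‖d‖ := by ring

end InnerProductSpace

theorem stmt_15_general {n : ℕ}
    (f ψ : EuclideanSpace ℝ (Fin n) → ℝ)
    (L : ℝ) (hL : 0 ≤ L)
    (hf : ContDiff ℝ 2 f)
    (hLip : ∀ u v : EuclideanSpace ℝ (Fin n),
      ‖fderiv ℝ (gradient f) v - fderiv ℝ (gradient f) u‖ ≤ L * ‖v - u‖)
    (μ σ δB : ℝ) (hμ : 0 < μ) (hσ : 0 < σ)
    (x : EuclideanSpace ℝ (Fin n)) (z : EuclideanSpace ℝ (Fin n))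
    (B : EuclideanSpace ℝ (Fin n) →L[ℝ] EuclideanSpace ℝ (Fin n))
    (hBpd : ∀ v : EuclideanSpace ℝ (Fin n), μ / 2 * ‖v‖ ^ 2 ≤ ⟪B v, v⟫)
    (hB : ‖B - fderiv ℝ (gradient f) z‖ ≤ δB)
    (xp : EuclideanSpace ℝ (Fin n))
    (ψp : EuclideanSpace ℝ (Fin n))
    (hψp : ∀ y : EuclideanSpace ℝ (Fin n), ψ xp + ⟪ψp, y - xp⟫ ≤ ψ y)
    (hmodel : ‖gradient f x + B (xp - x) + (σ / 2 * ‖xp - x‖) • (xp - x) + ψp‖ ≤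
      σ / 4 * ‖xp - x‖ ^ 2) :
    ∀ ψx : EuclideanSpace ℝ (Fin n),
      (∀ y : EuclideanSpace ℝ (Fin n), ψ x + ⟪ψx, y - x⟫ ≤ ψ y) →
      ‖gradient f xp + ψp‖ ≤
        (3 * σ / 4 + L / 2) * (2 * ‖gradient f x + ψx‖ / μ) ^ 2
          + (δB + L * ‖x - z‖) * (2 * ‖gradient f x + ψx‖ / μ) := by
  intro ψx hψx
  have hgrad : Differentiable ℝ (gradient f) :=
    ((InnerProductSpace.toDual ℝ _).symm.contDiff.comp
      (hf.fderiv_right (by norm_num))).differentiable one_ne_zero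
  have hBx : ‖B - fderiv ℝ (gradient f) x‖ ≤ δB + L * ‖x - z‖ :=
    calc _ ≤ ‖B - fderiv ℝ (gradient f) z‖
          + ‖fderiv ℝ (gradient f) z - fderiv ℝ (gradient f) x‖ :=
          norm_sub_le_norm_sub_add_norm_sub _ _ _
      _ ≤ δB + L * ‖x - z‖ := add_le_add hB (by simpa only [norm_sub_rev] using hLip x z)
  have hstep : ‖xp - x‖ ≤ 2 * ‖gradient f x + ψx‖ / μ :=
    norm_step_le_of_approx_stationary hμ hσ.le hBpd
      (inner_le_inner_of_subgradient hψx hψp) hmodel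
  have hδ : 0 ≤ δB + L * ‖x - z‖ := (norm_nonneg _).trans hBx
  calc ‖gradient f xp + ψp‖
      ≤ (3 * σ / 4 + L / 2) * ‖xp - x‖ ^ 2 + (δB + L * ‖x - z‖) * ‖xp - x‖ :=
        norm_gradient_add_le_of_approx_stationary hgrad hLip hσ.le hBx hmodel
    _ ≤ _ := by gcongr

/-- local one-step contraction bound for the (sub)gradient norm of
`F = f + ψ` after an inexact cubic Newton step with exact gradient `g = ∇f(x)` and positive
definite lazy Hessian approximation `B`. -/
theorem stmt_15 {n : ℕ} (hn : 1 ≤ n)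
    (f ψ : EuclideanSpace ℝ (Fin n) → ℝ) (Q : Set (EuclideanSpace ℝ (Fin n)))
    (L : ℝ) (hL : 0 ≤ L)
    (hf : ContDiff ℝ 2 f)
    (hLip : ∀ u v : EuclideanSpace ℝ (Fin n),
      ‖fderiv ℝ (gradient f) v - fderiv ℝ (gradient f) u‖ ≤ L * ‖v - u‖)
    (hQconv : Convex ℝ Q) (hψconv : ConvexOn ℝ Q ψ)
    (μ σ δB : ℝ) (hμ : 0 < μ) (hσ : 0 < σ) (hδB : 0 ≤ δB)
    (x : EuclideanSpace ℝ (Fin n)) (hx : x ∈ Q) (z : EuclideanSpace ℝ (Fin n))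
    (B : EuclideanSpace ℝ (Fin n) →L[ℝ] EuclideanSpace ℝ (Fin n))
    (hBsym : ∀ u v : EuclideanSpace ℝ (Fin n), ⟪B u, v⟫ = ⟪u, B v⟫)
    (hBpd : ∀ v : EuclideanSpace ℝ (Fin n), μ / 2 * ‖v‖ ^ 2 ≤ ⟪B v, v⟫)
    (hB : ‖B - fderiv ℝ (gradient f) z‖ ≤ δB)
    (xp : EuclideanSpace ℝ (Fin n)) (hxp : xp ∈ Q)
    (ψp : EuclideanSpace ℝ (Fin n))
    (hψp : ∀ y : EuclideanSpace ℝ (Fin n), ψ xp + ⟪ψp, y - xp⟫ ≤ ψ y)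
    (hmodel : ‖gradient f x + B (xp - x) + (σ / 2 * ‖xp - x‖) • (xp - x) + ψp‖ ≤
      σ / 4 * ‖xp - x‖ ^ 2) :
    ∀ ψx : EuclideanSpace ℝ (Fin n),
      (∀ y : EuclideanSpace ℝ (Fin n), ψ x + ⟪ψx, y - x⟫ ≤ ψ y) →
      ‖gradient f xp + ψp‖ ≤
        (3 * σ / 4 + L / 2) * (2 * ‖gradient f x + ψx‖ / μ) ^ 2
          + (δB + L * ‖x - z‖) * (2 * ‖gradient f x + ψx‖ / μ) :=
  stmt_15_general f ψ L hL hf hLip μ σ δB hμ hσ x z B hBpd hB xp ψp hψp hmodel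
end
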